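/- Let G = ℤ_{A₁} × ⋯ × ℤ_{A_N} be a product of finite cyclic groups (A₁,…,A_N positive integers) and let a₁,…,a_N be positive integers with a_j ≤ A_j. The cube Q_{a₁,…,a_N} = [a₁] × ⋯ × [a_N] tiles G by translations (i.e., some set of translates of Q_{a₁,…,a_N} partitions G) if and only if a_j divides A_j for every j = 1,…,N. -/

import Mathlib

/-- The discrete cube `[a₁] × ⋯ × [a_N]` inside `ℤ_{A₁} × ⋯ × ℤ_{A_N}`. -/
def cube {N : ℕ} (A a : Fin N → ℕ) : Finset (∀ j, ZMod (A j)) :=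
  Finset.image (fun v : ∀ j, Fin (a j) => fun j => ((v j : ℕ) : ZMod (A j))) Finset.univ

/-- `E` tiles the abelian group `G` with translate set `T`: every `x` has a unique
representation `x = e + t` with `e ∈ E`, `t ∈ T`. -/
def Tiles {G : Type*} [AddCommGroup G] (E T : Finset G) : Prop :=
  ∀ x : G, ∃! p : G × G, p.1 ∈ E ∧ p.2 ∈ T ∧ x = p.1 + p.2

/-!
A tiling `E ⊕ T = G` is the same as: every `x` has exactly one `t ∈ T` with `x - t ∈ E`.
In this form tilings of the factors of a product multiply to a tiling of the product, and
conversely a tiling of the product by a box `∏ Eᵢ` restricts, along the `j`-th coordinate axis,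
to a tiling of the `j`-th factor by `Eⱼ`. The cube is the box whose `j`-th side is the interval
`[aⱼ]` of `ℤ_{Aⱼ}`, so it tiles iff each `[aⱼ]` tiles `ℤ_{Aⱼ}`. A tiling of a finite group has
`|E| |T| = |G|`, which gives `aⱼ ∣ Aⱼ`; conversely if `aⱼ ∣ Aⱼ` the multiples of `aⱼ` tile
`ℤ_{Aⱼ}` with `[aⱼ]` by division with remainder.
-/

open Finset Fintype

section Tiles

variable {G : Type*} [AddCommGroup G]

theorem tiles_iff_existsUnique {E T : Finset G} :
    Tiles E T ↔ ∀ x, ∃! t, t ∈ T ∧ x - t ∈ E := by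
  refine forall_congr' fun x => ⟨fun ⟨p, hp, hu⟩ => ⟨p.2, ?_, ?_⟩, fun ⟨t, ht, hu⟩ => ?_⟩
  · exact ⟨hp.2.1, by rw [hp.2.2, add_sub_cancel_right]; exact hp.1⟩
  · rintro t ⟨htT, hxt⟩
    rw [← hu (x - t, t) ⟨hxt, htT, (sub_add_cancel x t).symm⟩]
  · refine ⟨(x - t, t), ⟨ht.2, ht.1, (sub_add_cancel x t).symm⟩, ?_⟩
    rintro ⟨e, s⟩ ⟨he, hs, rfl⟩
    obtain rfl : s = t := hu s ⟨hs, by rwa [add_sub_cancel_right]⟩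
    rw [add_sub_cancel_right]

theorem Tiles.card_mul_card [Fintype G] {E T : Finset G} (h : Tiles E T) :
    #E * #T = Fintype.card G := by
  rw [tiles_iff_existsUnique] at h
  rw [← card_product, ← card_univ]
  refine card_bij (fun p _ => p.1 + p.2) (fun _ _ => mem_univ _) ?_ ?_
  · rintro ⟨e₁, t₁⟩ h₁ ⟨e₂, t₂⟩ h₂ hsum
    simp only [mem_product] at h₁ h₂
    dsimp only at hsum
    obtain rfl : t₁ = t₂ := (h (e₁ + t₁)).unique
      ⟨h₁.2, by rw [add_sub_cancel_right]; exact h₁.1⟩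
      ⟨h₂.2, by rw [hsum, add_sub_cancel_right]; exact h₂.1⟩
    rw [(add_left_inj _).1 hsum]
  · intro x _
    obtain ⟨t, ⟨ht, hxt⟩, -⟩ := h x
    exact ⟨(x - t, t), mem_product.2 ⟨hxt, ht⟩, sub_add_cancel x t⟩

end Tiles

section Pi

variable {ι : Type*} [Fintype ι] [DecidableEq ι] {M : ι → Type*} [∀ i, AddCommGroup (M i)]

theorem Tiles.pi {E T : ∀ i, Finset (M i)} (h : ∀ i, Tiles (E i) (T i)) :
    Tiles (piFinset E) (piFinset T) := by
  simp only [tiles_iff_existsUnique, mem_piFinset, Pi.sub_apply] at h ⊢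
  intro x
  choose t ht hu using fun i => h i (x i)
  exact ⟨t, ⟨fun i => (ht i).1, fun i => (ht i).2⟩,
    fun s hs => funext fun i => hu i (s i) ⟨hs.1 i, hs.2 i⟩⟩

theorem Tiles.exists_tiles_of_pi {E : ∀ i, Finset (M i)} {T : Finset (∀ i, M i)}
    (h : Tiles (piFinset E) T) (j : ι) : ∃ T', Tiles (E j) T' := by
  classical
  rw [tiles_iff_existsUnique] at h
  -- the translates meeting the `j`-th coordinate axis, and their `j`-th coordinates
  refine ⟨((T.filter fun t => ∀ k ≠ j, -t k ∈ E k)).image (· j),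
    tiles_iff_existsUnique.2 fun c => ?_⟩
  obtain ⟨t, ⟨ht, hct⟩, hu⟩ := h (Pi.single j c)
  have hct' k : Pi.single j c k - t k ∈ E k := mem_piFinset.1 hct k
  refine ⟨t j, ⟨mem_image_of_mem _ (mem_filter.2 ⟨ht, fun k hk => ?_⟩), ?_⟩, ?_⟩
  · simpa [Pi.single_apply, hk] using hct' k
  · simpa using hct' j
  · rintro _ ⟨hsj, hcs⟩
    obtain ⟨s, hs, rfl⟩ := mem_image.1 hsj
    rw [mem_filter] at hs
    refine congrFun (hu s ⟨hs.1, mem_piFinset.2 fun k => ?_⟩) j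
    by_cases hk : k = j
    · subst hk; simpa using hcs
    · simpa [Pi.single_apply, hk] using hs.2 k hk

end Pi

/-- The interval `[a] = {0, …, a - 1}` in `ℤ_A`. -/
def initialSegment (A a : ℕ) : Finset (ZMod A) :=
  univ.image fun v : Fin a => ((v : ℕ) : ZMod A)

theorem cube_eq_piFinset {N : ℕ} (A a : Fin N → ℕ) :
    cube A a = piFinset fun j => initialSegment (A j) (a j) := by
  simp only [cube, initialSegment, piFinset_image, piFinset_univ]

section initialSegment

variable {A a : ℕ}

theorem mem_initialSegment [NeZero A] {x : ZMod A} (hle : a ≤ A) :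
    x ∈ initialSegment A a ↔ x.val < a := by
  refine ⟨?_, fun hx => mem_image.2 ⟨⟨x.val, hx⟩, mem_univ _, ZMod.natCast_zmod_val x⟩⟩
  intro hx
  obtain ⟨v, -, rfl⟩ := mem_image.1 hx
  rw [ZMod.val_natCast_of_lt (v.2.trans_le hle)]
  exact v.2

theorem card_initialSegment (hle : a ≤ A) : #(initialSegment A a) = a := by
  rw [initialSegment, card_image_of_injective, card_univ, Fintype.card_fin]
  intro v w hvw
  have := congrArg ZMod.val hvw
  rwa [ZMod.val_natCast_of_lt (v.2.trans_le hle), ZMod.val_natCast_of_lt (w.2.trans_le hle),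
    Fin.val_inj] at this

theorem tiles_initialSegment_multiples [NeZero A] (h : a ∣ A) :
    Tiles (initialSegment A a) ((range (A / a)).image fun q => ((q * a : ℕ) : ZMod A)) := by
  have ha : 0 < a := Nat.pos_of_dvd_of_pos h (Nat.pos_of_neZero A)
  have hle : a ≤ A := Nat.le_of_dvd (Nat.pos_of_neZero A) h
  simp only [tiles_iff_existsUnique, mem_initialSegment hle, mem_image, mem_range]
  intro x
  refine ⟨((x.val / a * a : ℕ) : ZMod A),
    ⟨⟨x.val / a, Nat.div_lt_div_of_lt_of_dvd h x.val_lt, rfl⟩, ?_⟩, ?_⟩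
  · have : x - ((x.val / a * a : ℕ) : ZMod A) = ((x.val % a : ℕ) : ZMod A) := by
      rw [sub_eq_iff_eq_add, ← Nat.cast_add, Nat.mod_add_div', ZMod.natCast_zmod_val]
    rw [this, ZMod.val_natCast_of_lt ((Nat.mod_lt _ ha).trans_le hle)]
    exact Nat.mod_lt _ ha
  · rintro _ ⟨⟨q, hq, rfl⟩, hr⟩
    set r := x - ((q * a : ℕ) : ZMod A)
    have hlt : r.val + q * a < A := calc
      r.val + q * a < (q + 1) * a := by rw [add_one_mul]; omega
      _ ≤ A / a * a := Nat.mul_le_mul_right _ hq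
      _ = A := Nat.div_mul_cancel h
    have hx : x.val = r.val + q * a := by
      rw [← ZMod.val_natCast_of_lt hlt, Nat.cast_add, ZMod.natCast_zmod_val, sub_add_cancel]
    rw [hx, Nat.add_mul_div_right _ _ ha, Nat.div_eq_of_lt hr, zero_add]

end initialSegment

theorem cube_tiles_iff_dvd {N : ℕ} (A a : Fin N → ℕ) [∀ j, NeZero (A j)]
    (hle : ∀ j, a j ≤ A j) :
    (∃ T : Finset (∀ j, ZMod (A j)), Tiles (cube A a) T) ↔ ∀ j, a j ∣ A j := by
  rw [cube_eq_piFinset]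
  constructor
  · rintro ⟨T, hT⟩ j
    obtain ⟨T', hT'⟩ := hT.exists_tiles_of_pi j
    have hcard := hT'.card_mul_card
    rw [card_initialSegment (hle j), ZMod.card] at hcard
    exact Dvd.intro _ hcard
  · exact fun hdvd => ⟨_, Tiles.pi fun j => tiles_initialSegment_multiples (hdvd j)⟩
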